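/- Under the same hypotheses (X_{n+1} ≠ 0), the (n-1)-th column of H⁻¹ is C_{n-1} = (-Y_1/Y_{n+2}, …, -Y_n/Y_{n+2})ᵗ and the (n-2)-th column is C_{n-2} = (-X_1/X_{n+1}, …, -X_n/X_{n+1})ᵗ, i.e., (H⁻¹)_{i,n-1} = -Y_i/Y_{n+2} and (H⁻¹)_{i,n-2} = -X_i/X_{n+1} for all 1 ≤ i ≤ n. -/

import Mathlib

open Matrix

/-- The `n × n` heptadiagonal matrix of (1.1), with 1-indexed diagonal sequences
`a, b, c, d, e, f, g : ℤ → ℝ` (entry `H i j` with `i, j : Fin n` corresponds to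
row `i+1`, column `j+1` in the paper's indexing). -/
def heptaMatrix (n : ℕ) (a b c d e f g : ℤ → ℝ) : Matrix (Fin n) (Fin n) ℝ :=
  fun i j =>
    if ((j : ℤ) + 1) = ((i : ℤ) + 1) - 3 then a ((i : ℤ) + 1)
    else if ((j : ℤ) + 1) = ((i : ℤ) + 1) - 2 then b ((i : ℤ) + 1)
    else if ((j : ℤ) + 1) = ((i : ℤ) + 1) - 1 then c ((i : ℤ) + 1)
    else if ((j : ℤ) + 1) = ((i : ℤ) + 1) then d ((i : ℤ) + 1)
    else if ((j : ℤ) + 1) = ((i : ℤ) + 1) + 1 then e ((i : ℤ) + 1)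
    else if ((j : ℤ) + 1) = ((i : ℤ) + 1) + 2 then f ((i : ℤ) + 1)
    else if ((j : ℤ) + 1) = ((i : ℤ) + 1) + 3 then g ((i : ℤ) + 1)
    else 0

/-- `W : ℤ → ℝ` satisfies the seven-term recurrence
`aᵢ W_{i-3} + bᵢ W_{i-2} + cᵢ W_{i-1} + dᵢ Wᵢ + eᵢ W_{i+1} + fᵢ W_{i+2} + gᵢ W_{i+3} = 0`
for `1 ≤ i ≤ n`, with out-of-range terms (index `≤ 0`) treated as zero. -/
def SevenTermRec (n : ℕ) (a b c d e f g : ℤ → ℝ) (W : ℤ → ℝ) : Prop :=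
  (∀ j : ℤ, j ≤ 0 → W j = 0) ∧
  (∀ i : ℤ, 1 ≤ i → i ≤ (n : ℤ) →
    a i * W (i - 3) + b i * W (i - 2) + c i * W (i - 1) + d i * W i +
      e i * W (i + 1) + f i * W (i + 2) + g i * W (i + 3) = 0)

/-- The `k`-th standard basis vector of `ℝⁿ` (1-indexed `k`). -/
def stdBasis (n : ℕ) (k : ℤ) : Fin n → ℝ := fun i => if ((i : ℤ) + 1) = k then 1 else 0

/-- The 3×3 determinant with rows formed from `A`, `B`, `C` at indices `p`, `q`, `r`. -/
def det3 (A B C : ℤ → ℝ) (p q r : ℤ) : ℝ :=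
  Matrix.det !![A p, A q, A r; B p, B q, B r; C p, C q, C r]

/-- The `k`-th column (1-indexed, `1 ≤ k ≤ n`) of a matrix, as a vector; `0` out of range. -/
def matCol (n : ℕ) (M : Matrix (Fin n) (Fin n) ℝ) (k : ℤ) : Fin n → ℝ :=
  fun i => if hk : 1 ≤ k ∧ k ≤ (n : ℤ) then M i ⟨(k - 1).toNat, by omega⟩ else 0


/-!
Extending a vector by zero turns `H v = 0` into the seven-term recurrence on `[1, n]` together
with vanishing at `n + 1, n + 2, n + 3`. Since `g i ≠ 0`, every solution of the recurrence is
`W₃ A + W₂ B + W₁ C`, so a kernel vector yields a `3 × 3` linear system with determinant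
`X_{n+1} ≠ 0`; hence `H` is invertible. Because `g = 1` and `f = e = 0` at the end of the band,
any solution `W` satisfies `H (W₁, …, Wₙ)ᵗ = -(W_{n+1} E_{n-2} + W_{n+2} E_{n-1} + W_{n+3} E_n)`.
The cofactor sequences `X` and `Y` are solutions with two of these three boundary values equal to
zero (a determinant with a repeated column), so `H X` and `H Y` are multiples of single basis
vectors, which identifies two columns of `H⁻¹`.
-/

/-- The coordinate `i : Fin n` sits at index `i + 1`, as in the paper. -/
def zeroExt {α : Type*} [Zero α] {n : ℕ} (v : Fin n → α) (p : ℤ) : α :=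
  if h : 1 ≤ p ∧ p ≤ (n : ℤ) then v ⟨(p - 1).toNat, by omega⟩ else 0

lemma zeroExt_coe_add_one {α : Type*} [Zero α] {n : ℕ} (v : Fin n → α) (i : Fin n) :
    zeroExt v ((i : ℤ) + 1) = v i := by
  rw [zeroExt, dif_pos (by omega)]
  congr
  omega

lemma zeroExt_of_not_mem {α : Type*} [Zero α] {n : ℕ} (v : Fin n → α) {p : ℤ}
    (hp : ¬(1 ≤ p ∧ p ≤ (n : ℤ))) : zeroExt v p = 0 :=
  dif_neg hp

lemma zeroExt_comp_add_one {n : ℕ} {W : ℤ → ℝ} (hW : ∀ j : ℤ, j ≤ 0 → W j = 0) (p : ℤ) :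
    zeroExt (fun i : Fin n => W ((i : ℤ) + 1)) p = if p ≤ (n : ℤ) then W p else 0 := by
  unfold zeroExt
  split_ifs with h h'
  · simp only
    congr 1
    omega
  · omega
  · exact (hW p (by omega)).symm
  · rfl

lemma sum_ite_coe_add_one_eq {R : Type*} [NonUnitalNonAssocSemiring R] {n : ℕ} (v : Fin n → R)
    (p : ℤ) (x : R) :
    (∑ j : Fin n, if (j : ℤ) + 1 = p then x * v j else 0) = x * zeroExt v p := by
  by_cases hp : 1 ≤ p ∧ p ≤ (n : ℤ)
  · rw [Finset.sum_eq_single_of_mem ⟨(p - 1).toNat, by omega⟩ (Finset.mem_univ _)]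
    · rw [if_pos (by simp; omega), zeroExt, dif_pos hp]
    · intro j _ hj
      rw [if_neg]
      intro h
      exact hj (Fin.ext (by simp; omega))
  · rw [zeroExt_of_not_mem v hp, mul_zero]
    refine Finset.sum_eq_zero fun j _ => if_neg ?_
    omega

lemma stdBasis_eq_single {n : ℕ} {k : Fin n} {p : ℤ} (hk : (k : ℤ) + 1 = p) :
    _root_.stdBasis n p = Pi.single k 1 := by
  subst hk
  ext i
  simp [_root_.stdBasis, Pi.single_apply, Fin.ext_iff]

lemma Matrix.inv_apply_eq_div_of_mulVec_eq_single {K ι : Type*} [Field K] [Fintype ι]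
    [DecidableEq ι] {M : Matrix ι ι K} (hM : IsUnit M.det) {v : ι → K} {k : ι} {s : K}
    (hs : s ≠ 0) (h : M *ᵥ v = Pi.single k s) (i : ι) : M⁻¹ i k = v i / s := by
  have hv : M⁻¹ *ᵥ Pi.single k s = v := by
    rw [← h, mulVec_mulVec, nonsing_inv_mul _ hM, one_mulVec]
  rw [eq_div_iff hs, ← hv, mulVec_single]
  rfl

section det3

variable (A B C : ℤ → ℝ)

lemma det3_expand (p q r : ℤ) :
    det3 A B C p q r = (B q * C r - B r * C q) * A p + (A r * C q - A q * C r) * B p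
      + (A q * B r - A r * B q) * C p := by
  simp only [det3, det_fin_three, of_apply, cons_val', cons_val_zero, cons_val_one, cons_val,
    cons_val_fin_one, Fin.isValue]
  ring

lemma det3_swap_left (p q r : ℤ) : det3 A B C q p r = -det3 A B C p q r := by
  rw [det3_expand, det3_expand]; ring

lemma det3_self_left (p r : ℤ) : det3 A B C p p r = 0 := by
  rw [det3_expand]; ring

lemma det3_self_right (p q : ℤ) : det3 A B C p q p = 0 := by
  rw [det3_expand]; ring

lemma eq_zero_of_det3_ne_zero {p q r : ℤ} (hd : det3 A B C p q r ≠ 0) {x y z : ℝ}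
    (hp : x * A p + y * B p + z * C p = 0) (hq : x * A q + y * B q + z * C q = 0)
    (hr : x * A r + y * B r + z * C r = 0) : x = 0 ∧ y = 0 ∧ z = 0 := by
  have := eq_zero_of_vecMul_eq_zero hd (v := ![x, y, z]) <| by
    ext k
    fin_cases k <;>
      simp only [vecMul, dotProduct, Fin.sum_univ_three, of_apply, cons_val', cons_val_zero,
        cons_val_one, cons_val, cons_val_fin_one, Fin.isValue, Fin.zero_eta, Fin.mk_one,
        Fin.reduceFinMk, Pi.zero_apply] <;>
      linarith
  simpa using this

end det3

def sevenTerm (a b c d e f g W : ℤ → ℝ) (i : ℤ) : ℝ :=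
  a i * W (i - 3) + b i * W (i - 2) + c i * W (i - 1) + d i * W i +
    e i * W (i + 1) + f i * W (i + 2) + g i * W (i + 3)

section SevenTermRec

variable {n : ℕ} {a b c d e f g : ℤ → ℝ}

lemma SevenTermRec.sevenTerm_eq_zero {W : ℤ → ℝ} (hW : SevenTermRec n a b c d e f g W) {i : ℤ}
    (h1 : 1 ≤ i) (h2 : i ≤ (n : ℤ)) : sevenTerm a b c d e f g W i = 0 :=
  hW.2 i h1 h2

lemma SevenTermRec.add {U W : ℤ → ℝ} (hU : SevenTermRec n a b c d e f g U)
    (hW : SevenTermRec n a b c d e f g W) : SevenTermRec n a b c d e f g (fun j => U j + W j) :=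
  ⟨fun j hj => by simp [hU.1 j hj, hW.1 j hj], fun i h1 h2 => by
    linear_combination hU.2 i h1 h2 + hW.2 i h1 h2⟩

lemma SevenTermRec.const_mul {W : ℤ → ℝ} (hW : SevenTermRec n a b c d e f g W) (x : ℝ) :
    SevenTermRec n a b c d e f g (fun j => x * W j) :=
  ⟨fun j hj => by simp [hW.1 j hj], fun i h1 h2 => by linear_combination x * hW.2 i h1 h2⟩

lemma SevenTermRec.linear_comb {A B C : ℤ → ℝ} (hA : SevenTermRec n a b c d e f g A)
    (hB : SevenTermRec n a b c d e f g B) (hC : SevenTermRec n a b c d e f g C) (x y z : ℝ) :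
    SevenTermRec n a b c d e f g (fun j => x * A j + y * B j + z * C j) :=
  ((hA.const_mul x).add (hB.const_mul y)).add (hC.const_mul z)

lemma SevenTermRec.det3 {A B C : ℤ → ℝ} (hA : SevenTermRec n a b c d e f g A)
    (hB : SevenTermRec n a b c d e f g B) (hC : SevenTermRec n a b c d e f g C) (q r : ℤ) :
    SevenTermRec n a b c d e f g (fun j => det3 A B C j q r) := by
  simpa only [det3_expand] using hA.linear_comb hB hC _ _ _

/-- Forward substitution: as `g i ≠ 0`, the recurrence at `i` determines `W (i + 3)`. -/
lemma SevenTermRec.eq_zero_of_initial {W : ℤ → ℝ} (hg : ∀ i : ℤ, 1 ≤ i → i ≤ (n : ℤ) → g i ≠ 0)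
    (hW : SevenTermRec n a b c d e f g W) (h1 : W 1 = 0) (h2 : W 2 = 0) (h3 : W 3 = 0)
    {j : ℤ} (hj : j ≤ (n : ℤ) + 3) : W j = 0 := by
  suffices ∀ k : ℤ, 3 ≤ k → k ≤ (n : ℤ) + 3 → ∀ j ≤ k, W j = 0 from
    this (max j 3) (le_max_right _ _) (by omega) j (le_max_left _ _)
  intro k hk
  induction k, hk using Int.leInduction with
  | base =>
    intro _ j hj
    obtain h | h | h | h : j ≤ 0 ∨ j = 1 ∨ j = 2 ∨ j = 3 := by omega
    exacts [hW.1 j h, h ▸ h1, h ▸ h2, h ▸ h3]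
  | succ k hk ih =>
    intro hkn j hj
    rcases lt_or_eq_of_le hj with hj | rfl
    · exact ih (by omega) j (by omega)
    have hrec := hW.sevenTerm_eq_zero (i := k - 2) (by omega) (by omega)
    simp only [sevenTerm, ih (by omega) _ (by omega : k - 2 - 3 ≤ k),
      ih (by omega) _ (by omega : k - 2 - 2 ≤ k), ih (by omega) _ (by omega : k - 2 - 1 ≤ k),
      ih (by omega) _ (by omega : k - 2 ≤ k), ih (by omega) _ (by omega : k - 2 + 1 ≤ k),
      ih (by omega) _ (by omega : k - 2 + 2 ≤ k), mul_zero, zero_add,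
      show k - 2 + 3 = k + 1 by ring] at hrec
    exact (mul_eq_zero.mp hrec).resolve_left (hg _ (by omega) (by omega))

lemma SevenTermRec.eq_linear_comb {A B C W : ℤ → ℝ} (hW : SevenTermRec n a b c d e f g W)
    (hg : ∀ i : ℤ, 1 ≤ i → i ≤ (n : ℤ) → g i ≠ 0)
    (hA : SevenTermRec n a b c d e f g A) (hA1 : A 1 = 0) (hA2 : A 2 = 0) (hA3 : A 3 = 1)
    (hB : SevenTermRec n a b c d e f g B) (hB1 : B 1 = 0) (hB2 : B 2 = 1) (hB3 : B 3 = 0)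
    (hC : SevenTermRec n a b c d e f g C) (hC1 : C 1 = 1) (hC2 : C 2 = 0) (hC3 : C 3 = 0)
    {j : ℤ} (hj : j ≤ (n : ℤ) + 3) : W j = W 3 * A j + W 2 * B j + W 1 * C j := by
  have hD := hW.add ((hA.linear_comb hB hC (W 3) (W 2) (W 1)).const_mul (-1))
  have := hD.eq_zero_of_initial hg (by simp [hA1, hB1, hC1]) (by simp [hA2, hB2, hC2])
    (by simp [hA3, hB3, hC3]) hj
  linear_combination this

end SevenTermRec

lemma heptaMatrix_apply_mul (n : ℕ) (a b c d e f g : ℤ → ℝ) (v : Fin n → ℝ) (i j : Fin n) :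
    heptaMatrix n a b c d e f g i j * v j =
      (if (j : ℤ) + 1 = (i : ℤ) + 1 - 3 then a ((i : ℤ) + 1) * v j else 0)
      + (if (j : ℤ) + 1 = (i : ℤ) + 1 - 2 then b ((i : ℤ) + 1) * v j else 0)
      + (if (j : ℤ) + 1 = (i : ℤ) + 1 - 1 then c ((i : ℤ) + 1) * v j else 0)
      + (if (j : ℤ) + 1 = (i : ℤ) + 1 then d ((i : ℤ) + 1) * v j else 0)
      + (if (j : ℤ) + 1 = (i : ℤ) + 1 + 1 then e ((i : ℤ) + 1) * v j else 0)
      + (if (j : ℤ) + 1 = (i : ℤ) + 1 + 2 then f ((i : ℤ) + 1) * v j else 0)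
      + (if (j : ℤ) + 1 = (i : ℤ) + 1 + 3 then g ((i : ℤ) + 1) * v j else 0) := by
  unfold heptaMatrix
  split_ifs <;> first | (exfalso; omega) | ring

lemma heptaMatrix_mulVec_apply (n : ℕ) (a b c d e f g : ℤ → ℝ) (v : Fin n → ℝ) (i : Fin n) :
    (heptaMatrix n a b c d e f g *ᵥ v) i = sevenTerm a b c d e f g (zeroExt v) ((i : ℤ) + 1) := by
  simp only [mulVec, dotProduct, heptaMatrix_apply_mul, Finset.sum_add_distrib,
    sum_ite_coe_add_one_eq, sevenTerm]

lemma sevenTermRec_zeroExt_of_mulVec_eq_zero {n : ℕ} {a b c d e f g : ℤ → ℝ} {v : Fin n → ℝ}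
    (hv : heptaMatrix n a b c d e f g *ᵥ v = 0) : SevenTermRec n a b c d e f g (zeroExt v) := by
  refine ⟨fun j hj => zeroExt_of_not_mem v (by omega), fun i h1 h2 => ?_⟩
  have := heptaMatrix_mulVec_apply n a b c d e f g v ⟨(i - 1).toNat, by omega⟩
  rw [hv, show (((i - 1).toNat : ℕ) : ℤ) + 1 = i by omega] at this
  exact this.symm

lemma heptaMatrix_mulVec_of_sevenTermRec {n : ℕ} {a b c d e f g W : ℤ → ℝ}
    (hg1 : g ((n : ℤ) - 2) = 1) (hg2 : g ((n : ℤ) - 1) = 1) (hg3 : g (n : ℤ) = 1)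
    (hf1 : f ((n : ℤ) - 1) = 0) (hf2 : f (n : ℤ) = 0) (he1 : e (n : ℤ) = 0)
    (hW : SevenTermRec n a b c d e f g W) :
    heptaMatrix n a b c d e f g *ᵥ (fun i => W ((i : ℤ) + 1)) =
      -(W ((n : ℤ) + 1) • _root_.stdBasis n ((n : ℤ) - 2)
        + W ((n : ℤ) + 2) • _root_.stdBasis n ((n : ℤ) - 1)
        + W ((n : ℤ) + 3) • _root_.stdBasis n n) := by
  ext i
  have hp1 : 1 ≤ (i : ℤ) + 1 := by omega
  have hpn : (i : ℤ) + 1 ≤ n := by omega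
  have hrec := hW.sevenTerm_eq_zero hp1 hpn
  rw [heptaMatrix_mulVec_apply]
  simp only [sevenTerm, zeroExt_comp_add_one hW.1, Pi.neg_apply, Pi.add_apply, Pi.smul_apply,
    _root_.stdBasis, smul_eq_mul] at hrec ⊢
  generalize (i : ℤ) + 1 = p at hp1 hpn hrec ⊢
  obtain hp | rfl | rfl | rfl : p ≤ n - 3 ∨ p = n - 2 ∨ p = n - 1 ∨ p = n := by omega
  all_goals simp (disch := omega) only [if_pos, if_neg, if_true]
  · linear_combination hrec
  · rw [hg1, show (n : ℤ) - 2 + 3 = n + 1 by ring] at hrec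
    linear_combination hrec
  · rw [hg2, hf1, show (n : ℤ) - 1 + 3 = n + 2 by ring] at hrec
    linear_combination hrec
  · rw [hg3, hf2, he1] at hrec
    linear_combination hrec

lemma heptaMatrix_det_ne_zero {n : ℕ} {a b c d e f g A B C : ℤ → ℝ}
    (hg : ∀ i : ℤ, 1 ≤ i → i ≤ (n : ℤ) → g i ≠ 0)
    (hA : SevenTermRec n a b c d e f g A) (hA1 : A 1 = 0) (hA2 : A 2 = 0) (hA3 : A 3 = 1)
    (hB : SevenTermRec n a b c d e f g B) (hB1 : B 1 = 0) (hB2 : B 2 = 1) (hB3 : B 3 = 0)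
    (hC : SevenTermRec n a b c d e f g C) (hC1 : C 1 = 1) (hC2 : C 2 = 0) (hC3 : C 3 = 0)
    (hX : det3 A B C ((n : ℤ) + 1) ((n : ℤ) + 2) ((n : ℤ) + 3) ≠ 0) :
    (heptaMatrix n a b c d e f g).det ≠ 0 := by
  intro hdet
  obtain ⟨v, hv0, hv⟩ := exists_mulVec_eq_zero_iff.mpr hdet
  have hcomb := fun j (hj : j ≤ (n : ℤ) + 3) =>
    (sevenTermRec_zeroExt_of_mulVec_eq_zero hv).eq_linear_comb hg hA hA1 hA2 hA3 hB hB1 hB2 hB3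
      hC hC1 hC2 hC3 hj
  have hbeyond : ∀ k : ℤ, 1 ≤ k → zeroExt v ((n : ℤ) + k) = 0 :=
    fun k hk => zeroExt_of_not_mem v (by omega)
  obtain ⟨hx, hy, hz⟩ := eq_zero_of_det3_ne_zero A B C hX
    ((hcomb _ (by omega)).symm.trans (hbeyond 1 le_rfl))
    ((hcomb _ (by omega)).symm.trans (hbeyond 2 (by norm_num)))
    ((hcomb _ (by omega)).symm.trans (hbeyond 3 (by norm_num)))
  refine hv0 (funext fun i => ?_)
  rw [Pi.zero_apply, ← zeroExt_coe_add_one v i, hcomb _ (by omega), hx, hy, hz]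
  ring

theorem stmt_8 (n : ℕ) (hn : 4 < n) (a b c d e f g A B C : ℤ → ℝ)
    (hg : ∀ i : ℤ, 1 ≤ i → i ≤ (n : ℤ) - 3 → g i ≠ 0)
    (hg1 : g ((n : ℤ) - 2) = 1) (hg2 : g ((n : ℤ) - 1) = 1) (hg3 : g (n : ℤ) = 1)
    (hf1 : f ((n : ℤ) - 1) = 0) (hf2 : f (n : ℤ) = 0) (he1 : e (n : ℤ) = 0)
    (hA : SevenTermRec n a b c d e f g A) (hA1 : A 1 = 0) (hA2 : A 2 = 0) (hA3 : A 3 = 1)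
    (hB : SevenTermRec n a b c d e f g B) (hB1 : B 1 = 0) (hB2 : B 2 = 1) (hB3 : B 3 = 0)
    (hC : SevenTermRec n a b c d e f g C) (hC1 : C 1 = 1) (hC2 : C 2 = 0) (hC3 : C 3 = 0)
    (hX : det3 A B C ((n : ℤ) + 1) ((n : ℤ) + 2) ((n : ℤ) + 3) ≠ 0) :
    (∀ i : Fin n,
      (heptaMatrix n a b c d e f g)⁻¹ i ⟨n - 2, by omega⟩ =
        -(det3 A B C ((i : ℤ) + 1) ((n : ℤ) + 1) ((n : ℤ) + 3)) /
          det3 A B C ((n : ℤ) + 2) ((n : ℤ) + 1) ((n : ℤ) + 3)) ∧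
    (∀ i : Fin n,
      (heptaMatrix n a b c d e f g)⁻¹ i ⟨n - 3, by omega⟩ =
        -(det3 A B C ((i : ℤ) + 1) ((n : ℤ) + 2) ((n : ℤ) + 3)) /
          det3 A B C ((n : ℤ) + 1) ((n : ℤ) + 2) ((n : ℤ) + 3)) := by
  have hg' : ∀ i : ℤ, 1 ≤ i → i ≤ (n : ℤ) → g i ≠ 0 := by
    intro i h1 h2
    obtain h | rfl | rfl | rfl : i ≤ n - 3 ∨ i = n - 2 ∨ i = n - 1 ∨ i = n := by omega
    exacts [hg i h1 h, by simp [hg1], by simp [hg2], by simp [hg3]]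
  have hH : IsUnit (heptaMatrix n a b c d e f g).det :=
    (heptaMatrix_det_ne_zero hg' hA hA1 hA2 hA3 hB hB1 hB2 hB3 hC hC1 hC2 hC3 hX).isUnit
  have hY : det3 A B C ((n : ℤ) + 2) ((n : ℤ) + 1) ((n : ℤ) + 3) ≠ 0 := by
    rwa [det3_swap_left, neg_ne_zero]
  have hHW := fun q r =>
    heptaMatrix_mulVec_of_sevenTermRec hg1 hg2 hg3 hf1 hf2 he1 (hA.det3 hB hC q r)
  constructor
  · intro i
    rw [inv_apply_eq_div_of_mulVec_eq_single hH (neg_ne_zero.mpr hY) ?_ i, div_neg, neg_div]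
    rw [hHW, det3_self_left, det3_self_right,
      stdBasis_eq_single (k := ⟨n - 2, by omega⟩) (p := n - 1) (by simp; omega)]
    simp only [zero_smul, zero_add, add_zero, ← Pi.single_smul', smul_eq_mul, mul_one,
      Pi.single_neg]
  · intro i
    rw [inv_apply_eq_div_of_mulVec_eq_single hH (neg_ne_zero.mpr hX) ?_ i, div_neg, neg_div]
    rw [hHW, det3_self_left, det3_self_right,
      stdBasis_eq_single (k := ⟨n - 3, by omega⟩) (p := n - 2) (by simp; omega)]
    simp only [zero_smul, add_zero, ← Pi.single_smul', smul_eq_mul, mul_one, Pi.single_neg]
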